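/- arXiv:2601.16897 — 2 statements merged into one kernel-verified Lean document; each statement's English description precedes it below -/
import Mathlib

section
/- Let f, g : R^d → R be convex, w* a point with g(w*) ≤ 0, and 𝒜 ∪ ℬ = {0,...,T-1} a partition with 𝒜 nonempty, g(w_t) ≤ ε for t ∈ 𝒜, and g(w_t) > ε for t ∈ ℬ. Suppose (1/T)∑_{t∈𝒜}(f(w_t)-f(w*)) + (1/T)∑_{t∈ℬ}(g(w_t)-g(w*)) ≤ C and ε = (N+1)C with N ≥ 0. Set w̄ = (1/|𝒜|)∑_{t∈𝒜} w_t. Then f(w̄) - f(w*) ≤ ε and g(w̄) ≤ ε. -/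
open Finset

/-- ε-solution extraction for the hard-switching gradient method. -/
theorem hard_switching_eps_solution (d T : ℕ) (hT : 0 < T)
    (f g : EuclideanSpace ℝ (Fin d) → ℝ)
    (hf : ConvexOn ℝ Set.univ f) (hg : ConvexOn ℝ Set.univ g)
    (𝒜 ℬ : Finset ℕ)
    (hpart : 𝒜 ∪ ℬ = Finset.range T) (hdisj : Disjoint 𝒜 ℬ)
    (hA : 𝒜.Nonempty)
    (w : ℕ → EuclideanSpace ℝ (Fin d)) (wstar : EuclideanSpace ℝ (Fin d))
    (hws : g wstar ≤ 0)
    (C ε N : ℝ) (hC : 0 < C) (hN : 0 ≤ N) (hε : ε = (N + 1) * C)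
    (hfeasA : ∀ t ∈ 𝒜, g (w t) ≤ ε)
    (hviolB : ∀ t ∈ ℬ, g (w t) > ε)
    (hbound : (T : ℝ)⁻¹ * ∑ t ∈ 𝒜, (f (w t) - f wstar)
        + (T : ℝ)⁻¹ * ∑ t ∈ ℬ, (g (w t) - g wstar) ≤ C)
    (wbar : EuclideanSpace ℝ (Fin d))
    (hwbar : wbar = ((𝒜.card : ℝ))⁻¹ • ∑ t ∈ 𝒜, w t) :
    f wbar - f wstar ≤ ε ∧ g wbar ≤ ε := by
  have hεpos : 0 < ε := by nlinarith
  have hApos : 0 < (𝒜.card : ℝ) := by exact_mod_cast Finset.card_pos.mpr hA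
  have hsum1 : (0:ℝ) < ∑ _t ∈ 𝒜, (1:ℝ) := by simpa using hApos
  have hcm : wbar = 𝒜.centerMass (fun _ => (1:ℝ)) w := by
    rw [hwbar, Finset.centerMass]
    simp
  have jensen : ∀ h : EuclideanSpace ℝ (Fin d) → ℝ, ConvexOn ℝ Set.univ h →
      h wbar ≤ (𝒜.card : ℝ)⁻¹ * ∑ t ∈ 𝒜, h (w t) := by
    intro h hh
    have := hh.map_centerMass_le (p := w) (fun i _ => zero_le_one) hsum1 (fun i _ => Set.mem_univ _)
    rw [hcm]
    refine this.trans_eq ?_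
    rw [Finset.centerMass]
    simp [smul_eq_mul]
  have hgJ := jensen g hg
  have hfJ := jensen f hf
  constructor
  · -- objective bound
    have hTpos : 0 < (T : ℝ) := by exact_mod_cast hT
    have hcard : (𝒜.card : ℝ) + (ℬ.card : ℝ) = (T : ℝ) := by
      have := Finset.card_union_of_disjoint hdisj
      rw [hpart, Finset.card_range] at this
      exact_mod_cast this.symm
    set Sf := ∑ t ∈ 𝒜, (f (w t) - f wstar) with hSf
    set Sg := ∑ t ∈ ℬ, (g (w t) - g wstar) with hSg
    have hSgB : (ℬ.card : ℝ) * ε ≤ Sg := by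
      have : ∀ t ∈ ℬ, ε ≤ g (w t) - g wstar := by
        intro t ht
        have := hviolB t ht
        linarith
      calc (ℬ.card : ℝ) * ε = ∑ _t ∈ ℬ, ε := by rw [Finset.sum_const, nsmul_eq_mul]
        _ ≤ Sg := Finset.sum_le_sum this
    have hbound' : Sf + Sg ≤ (T : ℝ) * C := by
      have h2 : Sf + Sg = (T:ℝ) * ((T:ℝ)⁻¹ * Sf + (T:ℝ)⁻¹ * Sg) := by
        field_simp
      rw [h2]
      exact mul_le_mul_of_nonneg_left hbound hTpos.le |>.trans_eq rfl
    have hSfle : Sf ≤ (𝒜.card : ℝ) * ε := by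
      have hBnn : (0:ℝ) ≤ (ℬ.card : ℝ) := Nat.cast_nonneg _
      have hTC : (T:ℝ) * C = (𝒜.card : ℝ) * C + (ℬ.card : ℝ) * C := by rw [← hcard]; ring
      subst hε
      nlinarith [mul_nonneg hBnn (mul_nonneg hN hC.le), mul_nonneg hApos.le (mul_nonneg hN hC.le)]
    have h1 : f wbar - f wstar ≤ (𝒜.card : ℝ)⁻¹ * Sf := by
      have : (𝒜.card : ℝ)⁻¹ * Sf = (𝒜.card : ℝ)⁻¹ * ∑ t ∈ 𝒜, f (w t) - f wstar := by
        rw [hSf, Finset.sum_sub_distrib, Finset.sum_const, nsmul_eq_mul, mul_sub]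
        field_simp
      linarith [hfJ, this.ge]
    refine h1.trans ?_
    calc (𝒜.card : ℝ)⁻¹ * Sf ≤ (𝒜.card : ℝ)⁻¹ * ((𝒜.card : ℝ) * ε) :=
          mul_le_mul_of_nonneg_left hSfle (inv_nonneg.mpr hApos.le)
      _ = ε := by field_simp
  · refine hgJ.trans ?_
    calc (𝒜.card : ℝ)⁻¹ * ∑ t ∈ 𝒜, g (w t) ≤ (𝒜.card : ℝ)⁻¹ * ((𝒜.card : ℝ) * ε) := by
          refine mul_le_mul_of_nonneg_left ?_ (inv_nonneg.mpr hApos.le)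
          calc ∑ t ∈ 𝒜, g (w t) ≤ ∑ _t ∈ 𝒜, ε := Finset.sum_le_sum hfeasA
            _ = (𝒜.card : ℝ) * ε := by rw [Finset.sum_const, nsmul_eq_mul]
      _ = ε := by field_simp
end

section
/- Let f : R^d → R be ρ-weakly convex and let Φ(w) = f(w) + (ρ̂/2)‖w - w_t‖² + λ̂ g(w) with ρ̂ > ρ, λ̂ ≥ 0, g convex, and suppose ŵ_t minimizes Φ over a convex set 𝒳 containing w_t, with λ̂ g(ŵ_t) = 0. Then f(w_t) - f(ŵ_t) - (ρ̂/2)‖w_t - ŵ_t‖² ≥ -λ̂ g(w_t) + ((ρ̂-ρ)/2)‖w_t - ŵ_t‖². -/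
/-!
The proximal objective `Φ` is `(ρhat - ρ)`-strongly convex, being the sum of the
`(-ρ)`-strongly convex `f`, the `ρhat`-strongly convex `ρhat / 2 * ‖· - wt‖ ^ 2` and the
convex `lam * g`. A function that is `m`-strongly convex on a convex set exceeds its minimum
there by at least `m / 2` times the squared distance to the minimizer: compare the minimum
with the value at `(1 - t) • a + t • x` and let `t → 0`.
-/

open Set Filter Topology

lemma le_of_forall_one_sub_mul_le {c b : ℝ} (h : ∀ t ∈ Ioo (0 : ℝ) 1, (1 - t) * c ≤ b) :
    c ≤ b := by
  have hlim : Tendsto (fun t : ℝ => (1 - t) * c) (𝓝[>] 0) (𝓝 c) := by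
    have hcont : Continuous fun t : ℝ => (1 - t) * c := by fun_prop
    simpa using (hcont.tendsto 0).mono_left nhdsWithin_le_nhds
  exact le_of_tendsto hlim (eventually_of_mem (Ioo_mem_nhdsGT one_pos) h)

section NormedSpace

variable {E : Type*} [NormedAddCommGroup E] [NormedSpace ℝ E] {s : Set E} {m n : ℝ}
  {f g : E → ℝ}

lemma StrongConvexOn.add (hf : StrongConvexOn s m f) (hg : StrongConvexOn s n g) :
    StrongConvexOn s (m + n) (f + g) := by
  unfold StrongConvexOn at *
  convert UniformConvexOn.add hf hg using 1
  funext r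
  simp only [Pi.add_apply]
  ring

lemma StrongConvexOn.add_mul_sq_norm_sub_le_of_isMinOn {a x : E} (hf : StrongConvexOn s m f)
    (hmin : IsMinOn f s a) (ha : a ∈ s) (hx : x ∈ s) :
    f a + m / 2 * ‖x - a‖ ^ 2 ≤ f x := by
  suffices m / 2 * ‖x - a‖ ^ 2 ≤ f x - f a by linarith
  refine le_of_forall_one_sub_mul_le fun t ⟨ht0, ht1⟩ => ?_
  have hseg := hf.2 ha hx (sub_nonneg.2 ht1.le) ht0.le (sub_add_cancel 1 t)
  have hle := isMinOn_iff.1 hmin _ (hf.1 ha hx (sub_nonneg.2 ht1.le) ht0.le (sub_add_cancel 1 t))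
  rw [smul_eq_mul, smul_eq_mul, norm_sub_rev] at hseg
  refine le_of_mul_le_mul_left ?_ ht0
  linarith

end NormedSpace

lemma strongConvexOn_mul_sq_norm_sub {E : Type*} [NormedAddCommGroup E] [InnerProductSpace ℝ E]
    {s : Set E} (hs : Convex ℝ s) (m : ℝ) (c : E) :
    StrongConvexOn s m fun w => m / 2 * ‖w - c‖ ^ 2 := by
  rw [strongConvexOn_iff_convex]
  have haffine : (fun w => m / 2 * ‖w - c‖ ^ 2 - m / 2 * ‖w‖ ^ 2)
      = ⇑((-m) • (innerSL ℝ c).toLinearMap) + fun _ => m / 2 * ‖c‖ ^ 2 := by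
    funext w
    simp only [norm_sub_sq_real, Pi.add_apply, LinearMap.smul_apply, ContinuousLinearMap.coe_coe,
      innerSL_apply_apply, real_inner_comm c w, smul_eq_mul]
    ring
  rw [haffine]
  exact (((-m) • (innerSL ℝ c).toLinearMap).convexOn hs).add_const _

theorem proximal_gap_bound_general (d : ℕ)
    (f g : EuclideanSpace ℝ (Fin d) → ℝ)
    (ρ ρhat lam : ℝ) (hlam : 0 ≤ lam)
    (hf : ConvexOn ℝ Set.univ (fun w => f w + (ρ / 2) * ‖w‖ ^ 2))
    (hg : ConvexOn ℝ Set.univ g)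
    (𝒳 : Set (EuclideanSpace ℝ (Fin d))) (h𝒳 : Convex ℝ 𝒳)
    (wt whatt : EuclideanSpace ℝ (Fin d)) (hwt : wt ∈ 𝒳) (hwhatt : whatt ∈ 𝒳)
    (Φ : EuclideanSpace ℝ (Fin d) → ℝ)
    (hΦ : ∀ w, Φ w = f w + (ρhat / 2) * ‖w - wt‖ ^ 2 + lam * g w)
    (hmin : ∀ y ∈ 𝒳, Φ whatt ≤ Φ y)
    (hcs : lam * g whatt = 0) :
    f wt - f whatt - (ρhat / 2) * ‖wt - whatt‖ ^ 2
      ≥ -(lam * g wt) + ((ρhat - ρ) / 2) * ‖wt - whatt‖ ^ 2 := by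
  obtain rfl : Φ = fun w => f w + (ρhat / 2) * ‖w - wt‖ ^ 2 + lam * g w := funext hΦ
  have hf𝒳 : StrongConvexOn 𝒳 (-ρ) f :=
    strongConvexOn_iff_convex.2 (by simpa [neg_div] using hf.subset (subset_univ 𝒳) h𝒳)
  have hg𝒳 : StrongConvexOn 𝒳 0 fun w => lam * g w :=
    strongConvexOn_zero.2 ((hg.subset (subset_univ 𝒳) h𝒳).smul hlam)
  have hΦ𝒳 := (hf𝒳.add (strongConvexOn_mul_sq_norm_sub h𝒳 ρhat wt)).add hg𝒳
  have hgap := hΦ𝒳.add_mul_sq_norm_sub_le_of_isMinOn (isMinOn_iff.2 hmin) hwhatt hwt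
  simp only [Pi.add_apply, sub_self, norm_zero, hcs] at hgap
  rw [norm_sub_rev whatt wt] at hgap
  linarith

/-- Strong-convexity gap at the proximal minimizer with complementary
slackness. -/
theorem proximal_gap_bound (d : ℕ)
    (f g : EuclideanSpace ℝ (Fin d) → ℝ)
    (ρ ρhat lam : ℝ) (hρhat : ρhat > ρ) (hlam : 0 ≤ lam)
    (hf : ConvexOn ℝ Set.univ (fun w => f w + (ρ / 2) * ‖w‖ ^ 2))
    (hg : ConvexOn ℝ Set.univ g)
    (𝒳 : Set (EuclideanSpace ℝ (Fin d))) (h𝒳 : Convex ℝ 𝒳)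
    (wt whatt : EuclideanSpace ℝ (Fin d)) (hwt : wt ∈ 𝒳) (hwhatt : whatt ∈ 𝒳)
    (Φ : EuclideanSpace ℝ (Fin d) → ℝ)
    (hΦ : ∀ w, Φ w = f w + (ρhat / 2) * ‖w - wt‖ ^ 2 + lam * g w)
    (hmin : ∀ y ∈ 𝒳, Φ whatt ≤ Φ y)
    (hcs : lam * g whatt = 0) :
    f wt - f whatt - (ρhat / 2) * ‖wt - whatt‖ ^ 2
      ≥ -(lam * g wt) + ((ρhat - ρ) / 2) * ‖wt - whatt‖ ^ 2 :=
  proximal_gap_bound_general d f g ρ ρhat lam hlam hf hg 𝒳 h𝒳 wt whatt hwt hwhatt Φ hΦ hmin hcs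
end
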